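/- arXiv:1609.07684 — 3 statements merged into one kernel-verified Lean document; each statement's English description precedes it below -/
import Mathlib

section
/- If a formula φ of LKvr is derivable in the proof system SLKvr, then φ is valid on the class K of all models, i.e., M,s ⊨ φ for every model M in K and every world s of M. -/
/-- Formulas of the language LKvr: ⊤, proposition letters, ¬, ∧, □_i, ∇_i(·,d).
Proposition letters, agents, and constant symbols are all drawn from ℕ
(countably infinite sets). -/
inductive Formula : Type
  | top : Formula
  | atom : ℕ → Formula
  | neg : Formula → Formula
  | and : Formula → Formula → Formula
  | box : ℕ → Formula → Formula
  | nabla : ℕ → Formula → ℕ → Formula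
  deriving DecidableEq

namespace Formula

/-- ⊥ := ¬⊤ -/
def bot : Formula := neg top
/-- φ∨ψ := ¬(¬φ∧¬ψ) -/
def or (φ ψ : Formula) : Formula := neg (and (neg φ) (neg ψ))
/-- φ→ψ := ¬(φ∧¬ψ) -/
def imp (φ ψ : Formula) : Formula := neg (and φ (neg ψ))
/-- ◇_iφ := ¬□_i¬φ -/
def dia (i : ℕ) (φ : Formula) : Formula := neg (box i (neg φ))
/-- φ↔ψ := (φ→ψ)∧(ψ→φ) -/
def iff (φ ψ : Formula) : Formula := and (imp φ ψ) (imp ψ φ)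

/-- `subst ψ χ φ` is φ[ψ/χ]: the result of replacing every (outermost)
occurrence of ψ as a subformula of φ by χ. -/
def subst (ψ χ : Formula) : Formula → Formula
  | top => if top = ψ then χ else top
  | atom p => if atom p = ψ then χ else atom p
  | neg α => if neg α = ψ then χ else neg (subst ψ χ α)
  | and α β => if and α β = ψ then χ else and (subst ψ χ α) (subst ψ χ β)
  | box i α => if box i α = ψ then χ else box i (subst ψ χ α)
  | nabla i α d => if nabla i α d = ψ then χ else nabla i (subst ψ χ α) d

end Formula

/-- φ is an instance of a propositional tautology: it is true under every
assignment of truth values that respects ⊤, ¬ and ∧. -/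
def Taut (φ : Formula) : Prop :=
  ∀ v : Formula → Prop,
    v Formula.top →
    (∀ ψ, v (Formula.neg ψ) ↔ ¬ v ψ) →
    (∀ ψ χ, v (Formula.and ψ χ) ↔ (v ψ ∧ v χ)) →
    v φ

/-- Derivability in the proof system SLKvr. -/
inductive Derivable : Formula → Prop
  | taut {φ : Formula} : Taut φ → Derivable φ
  | axK (i : ℕ) (φ ψ : Formula) :
      Derivable ((Formula.box i (φ.imp ψ)).imp ((Formula.box i φ).imp (Formula.box i ψ)))
  | distNsv (i : ℕ) (φ ψ : Formula) (d : ℕ) :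
      Derivable ((Formula.box i (φ.imp ψ)).imp ((Formula.nabla i ψ d).imp (Formula.nabla i φ d)))
  | nsvBot (i d : ℕ) : Derivable (Formula.nabla i Formula.bot d)
  | nsvOr (i : ℕ) (φ ψ : Formula) (d : ℕ) :
      Derivable ((((Formula.dia i (φ.and ψ)).and (Formula.nabla i φ d)).and
        (Formula.nabla i ψ d)).imp (Formula.nabla i (φ.or ψ) d))
  | mp {φ ψ : Formula} : Derivable (φ.imp ψ) → Derivable φ → Derivable ψ
  | nec {φ : Formula} (i : ℕ) : Derivable φ → Derivable (Formula.box i φ)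
  | re {ψ χ : Formula} (φ : Formula) :
      Derivable (ψ.iff χ) → Derivable (φ.iff (Formula.subst ψ χ φ))

/-- A Kripke model with values: worlds W, values O, relations R_i,
propositional valuation V and value assignment VD. -/
structure Model where
  W : Type
  O : Type
  R : ℕ → W → W → Prop
  V : ℕ → W → Prop
  VD : ℕ → W → O

/-- Membership in the class K of all models: the sets of worlds and of values
are nonempty. -/
def Model.inK (M : Model) : Prop := Nonempty M.W ∧ Nonempty M.O

/-- Satisfaction. -/
def Sat (M : Model) : M.W → Formula → Prop
  | _, Formula.top => True
  | s, Formula.atom p => M.V p s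
  | s, Formula.neg φ => ¬ Sat M s φ
  | s, Formula.and φ ψ => Sat M s φ ∧ Sat M s ψ
  | s, Formula.box i φ => ∀ t, M.R i s t → Sat M t φ
  | s, Formula.nabla i φ d =>
      ∀ t₁ t₂, M.R i s t₁ → M.R i s t₂ → Sat M t₁ φ → Sat M t₂ φ →
        M.VD d t₁ = M.VD d t₂

/-- Validity on the class K of all models. -/
def Valid (φ : Formula) : Prop := ∀ M : Model, M.inK → ∀ s : M.W, Sat M s φ

/-- Conjunction of a nonempty list of formulas (φ₁∧…∧φₙ). -/
def conj : List Formula → Formula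
  | [] => Formula.top
  | [φ] => φ
  | φ :: ψ :: l => φ.and (conj (ψ :: l))

/-- Γ is consistent w.r.t. SLKvr: there is no finite subset {φ₁,…,φₙ} ⊆ Γ
(n ≥ 1) such that ¬(φ₁∧…∧φₙ) is derivable. -/
def Consistent (Γ : Set Formula) : Prop :=
  ¬ ∃ l : List Formula, l ≠ [] ∧ (∀ φ ∈ l, φ ∈ Γ) ∧ Derivable (Formula.neg (conj l))

/-- Maximal consistent set: consistent, and every proper superset is
inconsistent. -/
def MCS (Γ : Set Formula) : Prop :=
  Consistent Γ ∧ ∀ Δ : Set Formula, Γ ⊂ Δ → ¬ Consistent Δ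

/-- φ is derivable from Γ: there is a finite subset {ψ₁,…,ψₙ} ⊆ Γ with
(ψ₁∧…∧ψₙ)→φ derivable in SLKvr. -/
def DerivableFrom (Γ : Set Formula) (φ : Formula) : Prop :=
  ∃ l : List Formula, (∀ ψ ∈ l, ψ ∈ Γ) ∧ Derivable ((conj l).imp φ)

/-- A world of the canonical model of SLKvr: a triple ⟨Γ,f,g⟩ with Γ an MCS,
f : D → ℕ, g : Ag×LKvr×D → ℕ∪{*} (with `none` playing the role of *)
satisfying conditions (1) and (2). -/
structure CWorld where
  Γ : Set Formula
  f : ℕ → ℕ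
  g : ℕ → Formula → ℕ → Option ℕ
  mcs : MCS Γ
  cond1 : ∀ i φ d, g i φ d ≠ none ↔ (Formula.nabla i φ d).and (Formula.dia i φ) ∈ Γ
  cond2 : ∀ i φ ψ d, g i φ d ≠ none → g i ψ d ≠ none →
      (g i φ d = g i ψ d ↔ Formula.nabla i (φ.or ψ) d ∈ Γ)

/-- The canonical relation: s R_i t iff (3) {φ : □_iφ ∈ Γ_s} ⊆ Γ_t and
(4) whenever ∇_i(φ,d) ∈ Γ_s and φ ∈ Γ_t, then f_t(d) = g_s(i,φ,d). -/
def CRel (i : ℕ) (s t : CWorld) : Prop :=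
  (∀ φ, Formula.box i φ ∈ s.Γ → φ ∈ t.Γ) ∧
  (∀ φ d, Formula.nabla i φ d ∈ s.Γ → φ ∈ t.Γ → s.g i φ d = some (t.f d))

/-- The canonical model of SLKvr. -/
def CModel : Model where
  W := CWorld
  O := ℕ
  R := CRel
  V := fun p s => Formula.atom p ∈ s.Γ
  VD := fun d s => s.f d

/-! Soundness holds model by model: every axiom is true at every world, and modus ponens,
necessitation and RE preserve truth at all worlds of a fixed model (RE because replacing a
subformula by one equivalent to it at every world changes truth nowhere). The only axiom with
content is NSVOR: a common `φ ∧ ψ`-successor `u` forces every `φ ∨ ψ`-successor to carry the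
value of `d` at `u`. -/

section Semantics

variable {M : Model} {s : M.W}

@[simp] lemma sat_neg {φ : Formula} : Sat M s (.neg φ) ↔ ¬ Sat M s φ := Iff.rfl

@[simp] lemma sat_and {φ ψ : Formula} : Sat M s (φ.and ψ) ↔ Sat M s φ ∧ Sat M s ψ := Iff.rfl

@[simp] lemma sat_box {i : ℕ} {φ : Formula} :
    Sat M s (.box i φ) ↔ ∀ t, M.R i s t → Sat M t φ := Iff.rfl

@[simp] lemma sat_nabla {i d : ℕ} {φ : Formula} :
    Sat M s (.nabla i φ d) ↔ ∀ t₁ t₂, M.R i s t₁ → M.R i s t₂ → Sat M t₁ φ → Sat M t₂ φ →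
      M.VD d t₁ = M.VD d t₂ := Iff.rfl

@[simp] lemma sat_bot : ¬ Sat M s .bot := not_not_intro trivial

@[simp] lemma sat_imp {φ ψ : Formula} : Sat M s (φ.imp ψ) ↔ (Sat M s φ → Sat M s ψ) := by
  simp [Formula.imp]

@[simp] lemma sat_or {φ ψ : Formula} : Sat M s (φ.or ψ) ↔ Sat M s φ ∨ Sat M s ψ := by
  simp [Formula.or, or_iff_not_and_not]

@[simp] lemma sat_iff {φ ψ : Formula} : Sat M s (φ.iff ψ) ↔ (Sat M s φ ↔ Sat M s ψ) := by
  simp [Formula.iff, iff_iff_implies_and_implies]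

@[simp] lemma sat_dia {i : ℕ} {φ : Formula} :
    Sat M s (.dia i φ) ↔ ∃ t, M.R i s t ∧ Sat M t φ := by
  simp [Formula.dia]

lemma sat_of_taut {φ : Formula} (h : Taut φ) : Sat M s φ :=
  h (Sat M s) trivial (fun _ => Iff.rfl) (fun _ _ => Iff.rfl)

lemma sat_axK (i : ℕ) (φ ψ : Formula) :
    Sat M s ((Formula.box i (φ.imp ψ)).imp ((Formula.box i φ).imp (Formula.box i ψ))) := by
  simp only [sat_imp, sat_box]
  exact fun himp hφ t hst => himp t hst (hφ t hst)

lemma sat_distNsv (i : ℕ) (φ ψ : Formula) (d : ℕ) :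
    Sat M s ((Formula.box i (φ.imp ψ)).imp ((Formula.nabla i ψ d).imp (Formula.nabla i φ d))) := by
  simp only [sat_imp, sat_box, sat_nabla]
  exact fun himp hψ t₁ t₂ h₁ h₂ hφ₁ hφ₂ => hψ t₁ t₂ h₁ h₂ (himp t₁ h₁ hφ₁) (himp t₂ h₂ hφ₂)

lemma sat_nsvBot (i d : ℕ) : Sat M s (Formula.nabla i Formula.bot d) := by
  simp

lemma sat_nsvOr (i : ℕ) (φ ψ : Formula) (d : ℕ) :
    Sat M s ((((Formula.dia i (φ.and ψ)).and (Formula.nabla i φ d)).and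
      (Formula.nabla i ψ d)).imp (Formula.nabla i (φ.or ψ) d)) := by
  simp only [sat_imp, sat_and, sat_dia, sat_nabla, sat_or]
  rintro ⟨⟨⟨u, hsu, huφ, huψ⟩, hφ⟩, hψ⟩
  have value_eq_at_u : ∀ t, M.R i s t → Sat M t φ ∨ Sat M t ψ → M.VD d t = M.VD d u
    | t, hst, .inl htφ => hφ t u hst hsu htφ huφ
    | t, hst, .inr htψ => hψ t u hst hsu htψ huψ
  intro t₁ t₂ h₁ h₂ ht₁ ht₂
  rw [value_eq_at_u t₁ h₁ ht₁, value_eq_at_u t₂ h₂ ht₂]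

lemma sat_subst_iff {ψ χ : Formula} (hψχ : ∀ t : M.W, Sat M t ψ ↔ Sat M t χ) (φ : Formula) :
    Sat M s (Formula.subst ψ χ φ) ↔ Sat M s φ := by
  induction φ generalizing s <;> rw [Formula.subst] <;> split_ifs with h
  all_goals first
    | (subst h; exact (hψχ s).symm)
    | simp only [sat_neg, sat_and, sat_box, sat_nabla, *]

end Semantics

lemma sat_of_derivable {φ : Formula} (h : Derivable φ) (M : Model) (s : M.W) : Sat M s φ := by
  induction h generalizing s with
  | taut ht => exact sat_of_taut ht
  | axK i φ ψ => exact sat_axK i φ ψ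
  | distNsv i φ ψ d => exact sat_distNsv i φ ψ d
  | nsvBot i d => exact sat_nsvBot i d
  | nsvOr i φ ψ d => exact sat_nsvOr i φ ψ d
  | mp _ _ ihImp ih => exact sat_imp.mp (ihImp s) (ih s)
  | nec i _ ih => exact fun t _ => ih t
  | re φ _ ih => exact sat_iff.mpr (sat_subst_iff (fun t => sat_iff.mp (ih t)) φ).symm

/-- Soundness: every SLKvr-derivable formula is valid on the
class K of all models. -/
theorem slkvr_soundness (φ : Formula) (h : Derivable φ) : Valid φ :=
  fun M _ s => sat_of_derivable h M s
end

section
/- For all LKvr formulas φ, ψ, χ, every agent i, and every constant symbol d, the formula ◇_iψ ∧ ∇_i(φ∨ψ,d) ∧ ∇_i(ψ∨χ,d) → ∇_i(φ∨χ,d) is derivable in the proof system SLKvr. -/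
/-! Since ψ implies (φ∨ψ)∧(ψ∨χ), ◇_iψ yields the possibility premise of NSVOR for φ∨ψ and
ψ∨χ, which gives ∇_i((φ∨ψ)∨(ψ∨χ),d); as φ∨χ implies that disjunction, DISTNSV weakens it to
∇_i(φ∨χ,d). -/

namespace Derivable

variable {φ φ' ψ χ : Formula} {i d : ℕ}

lemma imp_trans (h₁ : Derivable (φ.imp ψ)) (h₂ : Derivable (ψ.imp χ)) :
    Derivable (φ.imp χ) := by
  refine mp (mp (taut ?_) h₁) h₂
  intro v _ hN hA
  simp only [Formula.imp, hN, hA]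
  tauto

lemma and_imp_and_left (h : Derivable (φ.imp φ')) (ψ : Formula) :
    Derivable ((φ.and ψ).imp (φ'.and ψ)) := by
  refine mp (taut ?_) h
  intro v _ hN hA
  simp only [Formula.imp, hN, hA]
  tauto

lemma neg_imp_neg (h : Derivable (φ.imp ψ)) : Derivable (ψ.neg.imp φ.neg) := by
  refine mp (taut ?_) h
  intro v _ hN hA
  simp only [Formula.imp, hN, hA]
  tauto

lemma dia_mono (h : Derivable (φ.imp ψ)) :
    Derivable ((Formula.dia i φ).imp (Formula.dia i ψ)) :=
  neg_imp_neg (mp (axK i _ _) (nec i (neg_imp_neg h)))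

lemma nabla_anti (h : Derivable (φ.imp ψ)) :
    Derivable ((Formula.nabla i ψ d).imp (Formula.nabla i φ d)) :=
  mp (distNsv i φ ψ d) (nec i h)

end Derivable

/-- ◇_iψ ∧ ∇_i(φ∨ψ,d) ∧ ∇_i(ψ∨χ,d) → ∇_i(φ∨χ,d) is derivable
in SLKvr. -/
theorem nabla_transitivity_derivable (φ ψ χ : Formula) (i d : ℕ) :
    Derivable ((((Formula.dia i ψ).and (Formula.nabla i (φ.or ψ) d)).and
      (Formula.nabla i (ψ.or χ) d)).imp (Formula.nabla i (φ.or χ) d)) := by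
  have hψ : Derivable (ψ.imp ((φ.or ψ).and (ψ.or χ))) := by
    refine Derivable.taut ?_
    intro v _ hN hA
    simp only [Formula.imp, Formula.or, hN, hA]
    tauto
  have hφχ : Derivable ((φ.or χ).imp ((φ.or ψ).or (ψ.or χ))) := by
    refine Derivable.taut ?_
    intro v _ hN hA
    simp only [Formula.imp, Formula.or, hN, hA]
    tauto
  exact ((hψ.dia_mono.and_imp_and_left _).and_imp_and_left _).imp_trans
    ((Derivable.nsvOr i _ _ d).imp_trans hφχ.nabla_anti)
end

section
/- Proposition (successor construction): Let s = ⟨Γ_s, f_s, g_s⟩ be a world of the canonical model of SLKvr, i an agent, Γ a maximal consistent set such that {φ : □_iφ ∈ Γ_s} ⊆ Γ, and x a natural number. Then there exist functions f and g such that t = ⟨Γ, f, g⟩ is a world of the canonical model and s R_i t holds in the canonical model. -/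
/-!
Any MCS `Γ` carries a `g` satisfying (1) and (2): on the formulas `φ` with `∇ᵢ(φ,d) ∧ ◇ᵢφ ∈ Γ`,
the relation `∇ᵢ(φ∨ψ,d) ∈ Γ` is an equivalence (transitivity through `ψ` is NSVOR, using `◇ᵢψ`),
and its countably many classes can be numbered. For `f`, if `∇ᵢ(φ,d), ∇ᵢ(ψ,d) ∈ Γ_s` and
`φ, ψ ∈ Γ`, then `◇ᵢ(φ∧ψ) ∈ Γ_s` because `Γ` is an `i`-successor of `Γ_s`, so NSVOR gives
`∇ᵢ(φ∨ψ,d) ∈ Γ_s` and (2) gives `g_s(i,φ,d) = g_s(i,ψ,d)`; `f(d)` is this common value.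
-/

namespace Formula

def toNat : Formula → ℕ
  | top => Nat.pair 0 0
  | atom p => Nat.pair 1 p
  | neg φ => Nat.pair 2 φ.toNat
  | and φ ψ => Nat.pair 3 (Nat.pair φ.toNat ψ.toNat)
  | box i φ => Nat.pair 4 (Nat.pair i φ.toNat)
  | nabla i φ d => Nat.pair 5 (Nat.pair i (Nat.pair φ.toNat d))

theorem toNat_injective : Function.Injective toNat := by
  intro φ ψ h
  induction φ generalizing ψ <;> cases ψ <;> simp_all [toNat, Nat.pair_eq_pair] <;> grind

instance : Countable Formula := toNat_injective.countable

end Formula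

structure TruthAssignment where
  holds : Formula → Prop
  holds_top : holds .top
  holds_neg (φ : Formula) : holds (.neg φ) ↔ ¬ holds φ
  holds_and (φ ψ : Formula) : holds (.and φ ψ) ↔ holds φ ∧ holds ψ

namespace TruthAssignment

attribute [simp] holds_top holds_neg holds_and

variable (v : TruthAssignment)

@[simp]
theorem holds_imp (φ ψ : Formula) : v.holds (φ.imp ψ) ↔ (v.holds φ → v.holds ψ) := by
  simp [Formula.imp]

@[simp]
theorem holds_or (φ ψ : Formula) : v.holds (φ.or ψ) ↔ v.holds φ ∨ v.holds ψ := by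
  simp [Formula.or, or_iff_not_and_not]

@[simp]
theorem holds_conj (l : List Formula) : v.holds (conj l) ↔ ∀ φ ∈ l, v.holds φ := by
  induction l using conj.induct <;> simp_all [conj]

end TruthAssignment

theorem Taut.of_holds {φ : Formula} (h : ∀ v : TruthAssignment, v.holds φ) : Taut φ :=
  fun v h₀ h₁ h₂ => h ⟨v, h₀, h₁, h₂⟩

namespace Derivable

theorem of_holds_imp {φ ψ : Formula}
    (h : ∀ v : TruthAssignment, v.holds φ → v.holds ψ) : Derivable (φ.imp ψ) :=
  taut (.of_holds fun v => (v.holds_imp φ ψ).2 (h v))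

theorem mp_taut {φ ψ : Formula} (h : ∀ v : TruthAssignment, v.holds φ → v.holds ψ)
    (hφ : Derivable φ) : Derivable ψ :=
  mp (of_holds_imp h) hφ

theorem mp_taut₂ {φ ψ χ : Formula}
    (h : ∀ v : TruthAssignment, v.holds φ → v.holds ψ → v.holds χ)
    (hφ : Derivable φ) (hψ : Derivable ψ) : Derivable χ :=
  mp (mp (taut (.of_holds fun v => by simpa using h v)) hφ) hψ

end Derivable

def pointModel : Model where
  W := Unit
  O := Unit
  R _ _ _ := False
  V _ _ := False
  VD _ _ := ()

/-- Every `□`- and `∇`-formula holds in `pointModel`, so satisfaction there is truth-functional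
in the modal subformulas; this is what makes `RE` sound for it. -/
theorem sat_pointModel_subst {ψ χ : Formula} (h : Sat pointModel () ψ ↔ Sat pointModel () χ)
    (φ : Formula) : Sat pointModel () (Formula.subst ψ χ φ) ↔ Sat pointModel () φ := by
  induction φ <;> simp only [Formula.subst] <;> split_ifs with heq
  all_goals first | (subst heq; exact h.symm) | simp_all [Sat, pointModel]

theorem sat_pointModel_of_derivable {φ : Formula} (h : Derivable φ) : Sat pointModel () φ := by
  induction h with
  | taut h => exact h _ trivial (fun _ => Iff.rfl) (fun _ _ => Iff.rfl)
  | mp _ _ ih₁ ih₂ =>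
    simp only [Formula.imp, Sat] at ih₁
    tauto
  | @re ψ χ φ _ ih =>
    simp only [Formula.iff, Formula.imp, Sat] at ih ⊢
    have := sat_pointModel_subst (ψ := ψ) (χ := χ) (by tauto) φ
    tauto
  | _ => simp [Formula.imp, Sat, pointModel]

theorem not_derivable_bot : ¬ Derivable Formula.bot :=
  fun h => by simpa [Formula.bot, Sat] using sat_pointModel_of_derivable h

theorem DerivableFrom.neg_of_not_consistent_insert {Γ : Set Formula} {φ : Formula}
    (h : ¬ Consistent (insert φ Γ)) : DerivableFrom Γ φ.neg := by
  obtain ⟨l, -, hl, hd⟩ := not_not.1 h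
  refine ⟨l.filter (· ≠ φ), fun ψ hψ => ?_, hd.mp_taut fun v hv => ?_⟩
  · simp only [List.mem_filter, decide_eq_true_eq] at hψ
    exact (hl ψ hψ.1).resolve_left hψ.2
  · simp only [TruthAssignment.holds_imp, TruthAssignment.holds_neg,
      TruthAssignment.holds_conj, List.mem_filter, decide_eq_true_eq, and_imp] at hv ⊢
    exact fun hfilter hφ => hv fun ψ hψ => (eq_or_ne ψ φ).elim (· ▸ hφ) (hfilter ψ hψ)

theorem Consistent.not_derivableFrom_neg {Γ : Set Formula} (hΓ : Consistent Γ) {φ : Formula}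
    (hφ : DerivableFrom Γ φ) : ¬ DerivableFrom Γ φ.neg := by
  rintro ⟨l', hl', h'⟩
  obtain ⟨l, hl, h⟩ := hφ
  have hd : Derivable (.neg (conj (l ++ l'))) :=
    h.mp_taut₂ (fun v => by simp only [TruthAssignment.holds_imp, TruthAssignment.holds_neg,
      TruthAssignment.holds_conj, List.forall_mem_append]; tauto) h'
  rcases hll : l ++ l' with _ | ⟨ψ, l''⟩
  · rw [hll] at hd
    exact not_derivable_bot hd
  · refine hΓ ⟨_, List.cons_ne_nil ψ l'', fun χ hχ => ?_, hll ▸ hd⟩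
    rcases List.mem_append.1 (hll ▸ hχ) with hχ | hχ
    exacts [hl χ hχ, hl' χ hχ]

theorem Consistent.neg_not_mem {Γ : Set Formula} (hΓ : Consistent Γ) {φ : Formula} (hφ : φ ∈ Γ) :
    φ.neg ∉ Γ := fun hn =>
  hΓ.not_derivableFrom_neg (φ := φ) ⟨[φ], by simpa, .of_holds_imp fun _ => by simp [conj]⟩
    ⟨[φ.neg], by simpa, .of_holds_imp fun _ => by simp [conj]⟩

namespace MCS

variable {Γ : Set Formula} (hΓ : MCS Γ)
include hΓ

theorem derivableFrom_neg_of_not_mem {φ : Formula} (hφ : φ ∉ Γ) : DerivableFrom Γ φ.neg :=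
  .neg_of_not_consistent_insert (hΓ.2 _ (Set.ssubset_insert hφ))

theorem mem_of_derivableFrom {φ : Formula} (h : DerivableFrom Γ φ) : φ ∈ Γ := by
  by_contra hφ
  exact hΓ.1.not_derivableFrom_neg h (hΓ.derivableFrom_neg_of_not_mem hφ)

theorem mem_or_neg_mem (φ : Formula) : φ ∈ Γ ∨ φ.neg ∈ Γ := by
  by_contra! h
  exact hΓ.1.not_derivableFrom_neg (hΓ.derivableFrom_neg_of_not_mem h.1)
    (hΓ.derivableFrom_neg_of_not_mem h.2)

theorem mem_of_derivable_imp {φ ψ : Formula} (h : Derivable (φ.imp ψ)) (hφ : φ ∈ Γ) : ψ ∈ Γ :=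
  hΓ.mem_of_derivableFrom ⟨[φ], by simpa, h⟩

theorem mem_of_holds_imp {φ ψ : Formula} (h : ∀ v : TruthAssignment, v.holds φ → v.holds ψ)
    (hφ : φ ∈ Γ) : ψ ∈ Γ :=
  hΓ.mem_of_derivable_imp (.of_holds_imp h) hφ

theorem and_mem_iff {φ ψ : Formula} : φ.and ψ ∈ Γ ↔ φ ∈ Γ ∧ ψ ∈ Γ :=
  ⟨fun h => ⟨hΓ.mem_of_holds_imp (by simp_all) h, hΓ.mem_of_holds_imp (by simp_all) h⟩,
    fun h => hΓ.mem_of_derivableFrom ⟨[φ, ψ], by simpa, .of_holds_imp fun _ => by simp [conj]⟩⟩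

theorem nabla_mem_of_holds_imp {φ ψ : Formula} {i d : ℕ}
    (h : ∀ v : TruthAssignment, v.holds φ → v.holds ψ) (hψ : .nabla i ψ d ∈ Γ) :
    .nabla i φ d ∈ Γ :=
  hΓ.mem_of_derivable_imp (.mp (.distNsv i φ ψ d) (.nec i (.of_holds_imp h))) hψ

theorem dia_mem_of_holds_imp {φ ψ : Formula} {i : ℕ}
    (h : ∀ v : TruthAssignment, v.holds φ → v.holds ψ) (hφ : .dia i φ ∈ Γ) : .dia i ψ ∈ Γ := by
  have hbox : Derivable ((Formula.box i ψ.neg).imp (.box i φ.neg)) :=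
    .mp (.axK i _ _) (.nec i (.of_holds_imp fun v => by simpa using mt (h v)))
  exact hΓ.mem_of_derivable_imp (hbox.mp_taut fun v => by simp [Formula.dia]; tauto) hφ

theorem nabla_or_mem {φ ψ : Formula} {i d : ℕ} (hdia : .dia i (φ.and ψ) ∈ Γ)
    (hφ : .nabla i φ d ∈ Γ) (hψ : .nabla i ψ d ∈ Γ) : .nabla i (φ.or ψ) d ∈ Γ :=
  hΓ.mem_of_derivable_imp (.nsvOr i φ ψ d) (hΓ.and_mem_iff.2 ⟨hΓ.and_mem_iff.2 ⟨hdia, hφ⟩, hψ⟩)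

theorem nabla_or_self_mem {φ : Formula} {i d : ℕ} (h : .nabla i φ d ∈ Γ) :
    .nabla i (φ.or φ) d ∈ Γ :=
  hΓ.nabla_mem_of_holds_imp (by simp) h

theorem nabla_or_comm_mem {φ ψ : Formula} {i d : ℕ} (h : .nabla i (φ.or ψ) d ∈ Γ) :
    .nabla i (ψ.or φ) d ∈ Γ :=
  hΓ.nabla_mem_of_holds_imp (by simp [or_comm]) h

theorem nabla_or_trans_mem {φ ψ χ : Formula} {i d : ℕ} (hφψ : .nabla i (φ.or ψ) d ∈ Γ)
    (hψχ : .nabla i (ψ.or χ) d ∈ Γ) (hψ : .dia i ψ ∈ Γ) : .nabla i (φ.or χ) d ∈ Γ := by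
  have hdia : .dia i ((φ.or ψ).and (ψ.or χ)) ∈ Γ := hΓ.dia_mem_of_holds_imp (by simp_all) hψ
  exact hΓ.nabla_mem_of_holds_imp (by simp; tauto) (hΓ.nabla_or_mem hdia hφψ hψχ)

theorem nabla_or_equivalence (i d : ℕ) :
    Equivalence fun φ ψ : {φ : Formula // (Formula.nabla i φ d).and (.dia i φ) ∈ Γ} =>
      .nabla i (φ.1.or ψ.1) d ∈ Γ where
  refl φ := hΓ.nabla_or_self_mem (hΓ.and_mem_iff.1 φ.2).1
  symm := hΓ.nabla_or_comm_mem
  trans {_ ψ _} hφψ hψχ := hΓ.nabla_or_trans_mem hφψ hψχ (hΓ.and_mem_iff.1 ψ.2).2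

end MCS

theorem exists_option_nat_classifier {α : Type*} [Countable α] (p : α → Prop)
    (r : α → α → Prop) (hr : Equivalence fun a b : Subtype p => r a b) :
    ∃ c : α → Option ℕ, (∀ a, c a ≠ none ↔ p a) ∧ ∀ a b, p a → p b → (c a = c b ↔ r a b) := by
  classical
  let S : Setoid (Subtype p) := ⟨_, hr⟩
  obtain ⟨F, hF⟩ := Countable.exists_injective_nat (Quotient S)
  refine ⟨fun a => if h : p a then some (F ⟦⟨a, h⟩⟧) else none,
    fun a => by by_cases h : p a <;> simp [h], fun a b ha hb => ?_⟩
  simp only [dif_pos ha, dif_pos hb, Option.some_inj, hF.eq_iff, Quotient.eq]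
  rfl

theorem MCS.exists_cworld {Γ : Set Formula} (hΓ : MCS Γ) (f : ℕ → ℕ) :
    ∃ t : CWorld, t.Γ = Γ ∧ t.f = f := by
  choose c hc₁ hc₂ using fun i d => exists_option_nat_classifier _
    (fun φ ψ : Formula => .nabla i (φ.or ψ) d ∈ Γ) (hΓ.nabla_or_equivalence i d)
  exact ⟨⟨Γ, f, fun i φ d => c i d φ, hΓ, fun i φ d => hc₁ i d φ,
    fun i φ ψ d hφ hψ => hc₂ i d φ ψ ((hc₁ i d φ).1 hφ) ((hc₁ i d ψ).1 hψ)⟩, rfl, rfl⟩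

theorem MCS.dia_mem_of_box_subset {Γs Γ : Set Formula} (hΓs : MCS Γs) (hΓ : Consistent Γ)
    {i : ℕ} (hsub : {φ | Formula.box i φ ∈ Γs} ⊆ Γ) {χ : Formula} (hχ : χ ∈ Γ) :
    .dia i χ ∈ Γs := by
  refine (hΓs.mem_or_neg_mem _).resolve_right fun h => hΓ.neg_not_mem hχ (hsub ?_)
  exact hΓs.mem_of_holds_imp (φ := (Formula.dia i χ).neg) (by simp [Formula.dia]) h

theorem CWorld.exists_value (s : CWorld) {i : ℕ} {Γ : Set Formula} (hΓ : MCS Γ)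
    (hsub : {φ | Formula.box i φ ∈ s.Γ} ⊆ Γ) (d : ℕ) :
    ∃ n, ∀ φ, .nabla i φ d ∈ s.Γ → φ ∈ Γ → s.g i φ d = some n := by
  by_cases h : ∃ ψ, .nabla i ψ d ∈ s.Γ ∧ ψ ∈ Γ
  · obtain ⟨ψ, hnψ, hψ⟩ := h
    have hdia {χ} (hχ : χ ∈ Γ) : .dia i χ ∈ s.Γ := s.mcs.dia_mem_of_box_subset hΓ.1 hsub hχ
    have hg {φ} (hn : .nabla i φ d ∈ s.Γ) (hφ : φ ∈ Γ) : s.g i φ d ≠ none :=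
      (s.cond1 i φ d).2 (s.mcs.and_mem_iff.2 ⟨hn, hdia hφ⟩)
    obtain ⟨n, hn⟩ := Option.ne_none_iff_exists'.1 (hg hnψ hψ)
    refine ⟨n, fun φ hnφ hφ => hn ▸ (s.cond2 i φ ψ d (hg hnφ hφ) (hg hnψ hψ)).2 ?_⟩
    exact s.mcs.nabla_or_mem (hdia (hΓ.and_mem_iff.2 ⟨hφ, hψ⟩)) hnφ hnψ
  · exact ⟨0, fun φ hn hφ => (h ⟨φ, hn, hφ⟩).elim⟩

theorem successor_construction_general (s : CWorld) (i : ℕ) (Γ : Set Formula)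
    (hΓ : MCS Γ) (hsub : {φ | Formula.box i φ ∈ s.Γ} ⊆ Γ) :
    ∃ t : CWorld, t.Γ = Γ ∧ CRel i s t := by
  choose f hf using s.exists_value hΓ hsub
  obtain ⟨t, rfl, rfl⟩ := hΓ.exists_cworld f
  exact ⟨t, rfl, fun _ h => hsub h, fun φ d => hf d φ⟩

/-- successor construction: given a canonical world s, an agent
i, an MCS Γ with {φ : □_iφ ∈ Γ_s} ⊆ Γ, and a natural number x, there are f and
g making t = ⟨Γ,f,g⟩ a canonical world with s R_i t. -/
theorem successor_construction (s : CWorld) (i : ℕ) (Γ : Set Formula)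
    (hΓ : MCS Γ) (hsub : {φ | Formula.box i φ ∈ s.Γ} ⊆ Γ) (x : ℕ) :
    ∃ t : CWorld, t.Γ = Γ ∧ CRel i s t :=
  successor_construction_general s i Γ hΓ hsub
end
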